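/- Let L₁, L₂, L₁′, L₂′ ⊂ V = 𝔽₂^{2n} be Lagrangian subspaces with dim(L₁ ∩ L₂) = dim(L₁′ ∩ L₂′), and let 0 ≤ m ≤ n. Then Σ_{S ∈ I_m(V)} |S ∩ L₁|² |S ∩ L₂|² = Σ_{S ∈ I_m(V)} |S ∩ L₁′|² |S ∩ L₂′|². -/

import Mathlib

/-!
Pairs of Lagrangians with intersections of equal dimension are related by a symplectic
automorphism, and such an automorphism permutes `I_m(V)` while preserving `|S ∩ L|`.

For the normal form, extend a basis of `I = L₁ ∩ L₂` to a basis `u` of `L₁` and pick vectors `w`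
dual to `u`, those dual to the complement of `I` inside `L₂` (possible because `L₂ ∩ L₁^⊥ = I`).
Adding multiples of `u` to `w` makes it isotropic without changing the duality, and the resulting
Darboux basis `(u, v)` has `L₁ = ⟨u⟩` and `L₂ = ⟨u_I, v_C⟩`. Two such bases of the same shape are
matched by a symplectic map.
-/

/-- The field with two elements. -/
abbrev F2 := ZMod 2

/-- The phase space `V = 𝔽₂ⁿ × 𝔽₂ⁿ`. -/
abbrev V (n : ℕ) : Type := (Fin n → F2) × (Fin n → F2)

/-- The symplectic form `[a,b] = aₓ·b_z + a_z·bₓ` on `V n`. -/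
def symp {n : ℕ} (a b : V n) : F2 :=
  (∑ i, a.1 i * b.2 i) + (∑ i, a.2 i * b.1 i)

/-- A subspace is isotropic if the symplectic form vanishes on it. -/
def IsIsotropic {n : ℕ} (S : Submodule F2 (V n)) : Prop :=
  ∀ x ∈ S, ∀ y ∈ S, symp x y = 0

/-- A Lagrangian subspace is an isotropic subspace of dimension `n`. -/
def IsLagrangian {n : ℕ} (S : Submodule F2 (V n)) : Prop :=
  IsIsotropic S ∧ Module.finrank F2 S = n

open Module Submodule

section LinearAlgebra

variable {K M ι : Type*} [Field K] [AddCommGroup M] [Module K M]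

lemma surjective_of_finrank_ker_add_card [FiniteDimensional K M] [Fintype ι]
    (f : M →ₗ[K] ι → K) (h : finrank K (LinearMap.ker f) + Fintype.card ι = finrank K M) :
    Function.Surjective f := by
  refine LinearMap.range_eq_top.1 (eq_top_of_finrank_eq ?_)
  have := f.finrank_range_add_finrank_ker
  rw [finrank_fintype_fun_eq_card]
  omega

lemma span_range_subtype_comp {p : Submodule K M} (b : Basis ι K p) :
    span K (Set.range (p.subtype ∘ b)) = p := by
  rw [Set.range_comp, span_image, b.span_eq, map_subtype_top]

lemma exists_spanning_family_adapted [FiniteDimensional K M] {I L : Submodule K M}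
    (hIL : I ≤ L) {k l : ℕ} (hk : finrank K I = k) (hl : finrank K L = l) :
    ∃ u : Fin k ⊕ Fin (l - k) → M,
      span K (Set.range u) = L ∧ span K (Set.range (u ∘ Sum.inl)) = I := by
  subst hk hl
  obtain ⟨C, hsup, hdisj⟩ : ∃ C, I ⊔ C = L ∧ Disjoint I C := by
    obtain ⟨C', hC'⟩ := I.exists_isCompl
    exact ⟨C' ⊓ L, by rw [← sup_inf_assoc_of_le _ hIL, hC'.sup_eq_top, top_inf_eq],
      hC'.disjoint.mono_right inf_le_left⟩
  have hC : finrank K C = finrank K L - finrank K I := by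
    have := Submodule.finrank_sup_add_finrank_inf_eq I C
    rw [hsup, hdisj.eq_bot, finrank_bot] at this
    omega
  let a := finBasis K I
  let c := finBasisOfFinrankEq K C hC
  refine ⟨Sum.elim (I.subtype ∘ a) (C.subtype ∘ c), ?_, span_range_subtype_comp a⟩
  rw [Set.Sum.elim_range, span_union, span_range_subtype_comp, span_range_subtype_comp, hsup]

end LinearAlgebra

section Symplectic

variable {n : ℕ}

def sympForm (n : ℕ) : LinearMap.BilinForm F2 (V n) :=
  LinearMap.mk₂ F2 symp
    (fun a a' b => by simp only [symp, Prod.fst_add, Prod.snd_add, Pi.add_apply, add_mul,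
      Finset.sum_add_distrib]; ring)
    (fun c a b => by simp only [symp, Prod.smul_fst, Prod.smul_snd, Pi.smul_apply, smul_eq_mul,
      mul_assoc, ← Finset.mul_sum, mul_add])
    (fun a b b' => by simp only [symp, Prod.fst_add, Prod.snd_add, Pi.add_apply, mul_add,
      Finset.sum_add_distrib]; ring)
    (fun c a b => by simp only [symp, Prod.smul_fst, Prod.smul_snd, Pi.smul_apply, smul_eq_mul,
      mul_left_comm _ c, ← Finset.mul_sum, mul_add])

@[simp] lemma sympForm_apply (a b : V n) : sympForm n a b = symp a b := rfl

lemma symp_comm (a b : V n) : symp a b = symp b a := by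
  simp only [symp, mul_comm (a.1 _), mul_comm (a.2 _), add_comm]

lemma symp_self (a : V n) : symp a a = 0 := by
  rw [symp, Finset.sum_congr rfl fun i _ => mul_comm (a.2 i) (a.1 i)]
  exact CharTwo.add_self_eq_zero _

lemma sympForm_nondegenerate : (sympForm n).Nondegenerate := by
  refine (LinearMap.IsRefl.nondegenerate_iff_separatingLeft
    (fun a b h => by rwa [sympForm_apply, symp_comm] at h)).2 fun a ha => ?_
  have h₁ : ∀ i, a.2 i = 0 := fun i => by
    simpa [symp, Pi.single_apply] using ha (Pi.single i 1, 0)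
  have h₂ : ∀ i, a.1 i = 0 := fun i => by
    simpa [symp, Pi.single_apply] using ha (0, Pi.single i 1)
  ext i <;> simp [h₁, h₂]

lemma finrank_V (n : ℕ) : finrank F2 (V n) = n + n := by
  simp [finrank_prod]

lemma IsLagrangian.mem_iff_forall_symp {L : Submodule F2 (V n)} (hL : IsLagrangian L) {x : V n} :
    x ∈ L ↔ ∀ y ∈ L, symp y x = 0 := by
  have hle : L ≤ (sympForm n).orthogonal L := fun x hx =>
    LinearMap.BilinForm.mem_orthogonal_iff.2 fun y hy => hL.1 y hy x hx
  have hfr : finrank F2 L = finrank F2 ((sympForm n).orthogonal L) := by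
    rw [LinearMap.BilinForm.finrank_orthogonal sympForm_nondegenerate, finrank_V, hL.2]
    omega
  exact (SetLike.ext_iff.1 (eq_of_le_of_finrank_eq hle hfr) x).trans
    LinearMap.BilinForm.mem_orthogonal_iff

lemma IsLagrangian.finrank_inf_le {L₁ : Submodule F2 (V n)} (h₁ : IsLagrangian L₁)
    (L₂ : Submodule F2 (V n)) : finrank F2 ↥(L₁ ⊓ L₂) ≤ n :=
  (Submodule.finrank_mono inf_le_left).trans_eq h₁.2

end Symplectic

section Darboux

variable {n : ℕ} {ι : Type*}

def sympPairing (u : ι → V n) : V n →ₗ[F2] ι → F2 :=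
  LinearMap.pi fun i => sympForm n (u i)

@[simp] lemma sympPairing_apply (u : ι → V n) (x : V n) (i : ι) :
    sympPairing u x i = symp (u i) x := rfl

lemma sympPairing_eq_zero_iff {u : ι → V n} {x : V n} :
    sympPairing u x = 0 ↔ ∀ y ∈ span F2 (Set.range u), symp y x = 0 := by
  change _ ↔ span F2 (Set.range u) ≤ LinearMap.ker ((sympForm n).flip x)
  rw [span_le, Set.range_subset_iff, funext_iff]
  rfl

lemma ker_sympPairing_of_span_eq {L : Submodule F2 (V n)} (hL : IsLagrangian L) {u : ι → V n}
    (hu : span F2 (Set.range u) = L) : LinearMap.ker (sympPairing u) = L := by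
  ext x
  rw [LinearMap.mem_ker, sympPairing_eq_zero_iff, hu, hL.mem_iff_forall_symp]

structure IsDarboux [DecidableEq ι] (u v : ι → V n) : Prop where
  symp_left : ∀ i j, symp (u i) (u j) = 0
  symp_right : ∀ i j, symp (v i) (v j) = 0
  symp_left_right : ∀ i j, symp (u i) (v j) = if i = j then 1 else 0

namespace IsDarboux

variable [DecidableEq ι] {u v u' v' : ι → V n}

lemma sympPairing_comp (h : IsDarboux u v) :
    sympPairing (Sum.elim v u) ∘ Sum.elim u v = fun q => Pi.single q 1 := by
  ext q p
  rw [Function.comp_apply, sympPairing_apply, Pi.single_apply]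
  rcases p with i | i <;> rcases q with j | j
  · simp [symp_comm (v i), h.symp_left_right, eq_comm]
  · simp [h.symp_right]
  · simp [h.symp_left]
  · simp [h.symp_left_right]

lemma linearIndependent (h : IsDarboux u v) : LinearIndependent F2 (Sum.elim u v) :=
  .of_comp (sympPairing (Sum.elim v u)) (h.sympPairing_comp ▸ Pi.linearIndependent_single_one _ _)

lemma symp_eq (h : IsDarboux u v) (h' : IsDarboux u' v') (p q : ι ⊕ ι) :
    symp (Sum.elim u v p) (Sum.elim u v q) = symp (Sum.elim u' v' p) (Sum.elim u' v' q) := by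
  rcases p with i | i <;> rcases q with j | j
  · simp only [Sum.elim_inl, h.symp_left, h'.symp_left]
  · simp [h.symp_left_right, h'.symp_left_right]
  · simp [symp_comm (v i), symp_comm (v' i), h.symp_left_right, h'.symp_left_right]
  · simp [h.symp_right, h'.symp_right]

end IsDarboux

end Darboux

section SymplecticEquiv

variable {n : ℕ}

def IsSymplectic (g : V n ≃ₗ[F2] V n) : Prop :=
  ∀ x y, symp (g x) (g y) = symp x y

lemma IsSymplectic.isIsotropic_map_iff {g : V n ≃ₗ[F2] V n} (hg : IsSymplectic g)
    {S : Submodule F2 (V n)} : IsIsotropic (S.map (g : V n →ₗ[F2] V n)) ↔ IsIsotropic S := by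
  simp only [IsIsotropic, mem_map, LinearEquiv.coe_coe, forall_exists_index, and_imp,
    forall_apply_eq_imp_iff₂, show ∀ x y, symp (g x) (g y) = symp x y from hg]

lemma IsDarboux.exists_isSymplectic {ι : Type*} [Fintype ι] [DecidableEq ι]
    {u v u' v' : ι → V n} (h : IsDarboux u v) (h' : IsDarboux u' v')
    (hι : Fintype.card ι = n) :
    ∃ g : V n ≃ₗ[F2] V n, IsSymplectic g ∧ (∀ i, g (u i) = u' i) ∧ ∀ i, g (v i) = v' i := by
  have hcard : Fintype.card (ι ⊕ ι) = finrank F2 (V n) := by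
    rw [Fintype.card_sum, hι, finrank_V]
  let b := basisOfLinearIndependentOfCardEqFinrank' _ h.linearIndependent hcard
  let b' := basisOfLinearIndependentOfCardEqFinrank' _ h'.linearIndependent hcard
  let g := b.equiv b' (Equiv.refl _)
  have hg : ∀ p, g (Sum.elim u v p) = Sum.elim u' v' p := fun p => by
    simpa [b, b'] using b.equiv_apply p b' (Equiv.refl _)
  refine ⟨g, fun x y => ?_, fun i => hg (.inl i), fun i => hg (.inr i)⟩
  have hform : (sympForm n).compl₁₂ (g : V n →ₗ[F2] V n) g = sympForm n :=
    LinearMap.BilinForm.ext_basis b fun p q => by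
      simpa [b, hg] using (h.symp_eq h' p q).symm
  simpa using LinearMap.congr_fun₂ hform x y

end SymplecticEquiv

section Isotropize

variable {n : ℕ} {ι : Type*} [Fintype ι] [LinearOrder ι] {u w : ι → V n}

-- In characteristic 2 the Gram matrix of `w` cannot be halved, so only its strictly lower
-- triangular part is corrected.
def isotropize (u w : ι → V n) (j : ι) : V n :=
  w j + ∑ l ∈ Finset.univ.filter (· < j), symp (w l) (w j) • u l

lemma symp_isotropize (j : ι) (x : V n) :
    symp (isotropize u w j) x =
      symp (w j) x + ∑ l ∈ Finset.univ.filter (· < j), symp (w l) (w j) * symp (u l) x := by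
  rw [isotropize, ← sympForm_apply, map_add, map_sum]
  simp only [LinearMap.add_apply, LinearMap.sum_apply, map_smul,
    LinearMap.smul_apply, sympForm_apply, smul_eq_mul]

lemma symp_isotropize_eq_ite (hu : ∀ i j, symp (u i) (u j) = 0)
    (huw : ∀ i j, symp (u i) (w j) = if i = j then 1 else 0) (i j : ι) :
    symp (u i) (isotropize u w j) = if i = j then 1 else 0 := by
  rw [symp_comm, symp_isotropize, symp_comm, huw]
  simp [hu]

lemma symp_isotropize_of_dual (huw : ∀ i j, symp (u i) (w j) = if i = j then 1 else 0)
    (i j : ι) :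
    symp (w i) (isotropize u w j) =
      symp (w i) (w j) + if i < j then symp (w i) (w j) else 0 := by
  rw [symp_comm, symp_isotropize, symp_comm (w j)]
  simp [huw]

lemma isDarboux_isotropize (hu : ∀ i j, symp (u i) (u j) = 0)
    (huw : ∀ i j, symp (u i) (w j) = if i = j then 1 else 0) :
    IsDarboux u (isotropize u w) := by
  refine ⟨hu, fun i j => ?_, symp_isotropize_eq_ite hu huw⟩
  rw [symp_isotropize, symp_isotropize_of_dual huw]
  simp only [symp_isotropize_eq_ite hu huw, mul_ite, mul_one, mul_zero,
    Finset.sum_ite_eq', Finset.mem_filter, Finset.mem_univ, true_and]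
  -- each Gram entry `symp (w i) (w j)` with `i ≠ j` is added twice, and the diagonal vanishes
  rcases lt_trichotomy i j with hij | rfl | hij
  · simp [hij, hij.not_gt, CharTwo.add_self_eq_zero]
  · simp [symp_self]
  · simp [hij, hij.not_gt, symp_comm (w j), CharTwo.add_self_eq_zero]

end Isotropize

section Adapted

variable {n : ℕ} {L₁ L₂ : Submodule F2 (V n)}

lemma exists_dual_family (h₁ : IsLagrangian L₁) (h₂ : IsLagrangian L₂) {k : ℕ}
    (hk : finrank F2 ↥(L₁ ⊓ L₂) = k) {u : Fin k ⊕ Fin (n - k) → V n}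
    (hu : span F2 (Set.range u) = L₁) (hu_inl : span F2 (Set.range (u ∘ Sum.inl)) = L₁ ⊓ L₂) :
    ∃ w : Fin k ⊕ Fin (n - k) → V n,
      (∀ i j, symp (u i) (w j) = if i = j then 1 else 0) ∧ ∀ j, w (.inr j) ∈ L₂ := by
  have hkn : k ≤ n := hk ▸ h₁.finrank_inf_le L₂
  have hu_inl_mem : ∀ i, u (.inl i) ∈ L₁ ⊓ L₂ := fun i => hu_inl ▸ subset_span ⟨i, rfl⟩
  have hker := ker_sympPairing_of_span_eq h₁ hu
  have hsurj : Function.Surjective (sympPairing u) := by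
    refine surjective_of_finrank_ker_add_card _ ?_
    rw [hker, h₁.2, Fintype.card_sum, Fintype.card_fin, Fintype.card_fin, finrank_V]
    omega
  let ψ := (sympPairing (u ∘ Sum.inr)).comp L₂.subtype
  have hkerψ : (LinearMap.ker ψ).map L₂.subtype = L₁ ⊓ L₂ := by
    ext x
    simp only [mem_map, LinearMap.mem_ker, subtype_apply, Subtype.exists, exists_and_right,
      exists_eq_right, mem_inf]
    constructor
    · rintro ⟨hx₂, hψx⟩
      refine ⟨?_, hx₂⟩
      rw [← hker, LinearMap.mem_ker]
      funext i
      rcases i with i | i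
      · exact h₂.1 _ (hu_inl_mem i).2 _ hx₂
      · exact congrFun hψx i
    · rintro ⟨hx₁, hx₂⟩
      exact ⟨hx₂, funext fun j => h₁.1 _ (hu ▸ subset_span ⟨_, rfl⟩) _ hx₁⟩
  have hψ : Function.Surjective ψ := by
    refine surjective_of_finrank_ker_add_card ψ ?_
    rw [← finrank_map_subtype_eq, hkerψ, hk, Fintype.card_fin, h₂.2]
    omega
  choose x hx using hsurj
  choose y hy using hψ
  refine ⟨Sum.elim (fun i => x (Pi.single (.inl i) 1)) (fun j => y (Pi.single j 1)),
    fun i j => ?_, fun j => (y _).2⟩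
  rcases j with j | j
  · exact (congrFun (hx _) i).trans (Pi.single_apply _ _ _)
  · rcases i with i | i
    · simpa using h₂.1 _ (hu_inl_mem i).2 _ (y _).2
    · simpa [ψ, Pi.single_apply] using congrFun (hy (Pi.single j 1)) i

lemma exists_isDarboux_adapted (h₁ : IsLagrangian L₁) (h₂ : IsLagrangian L₂) {k : ℕ}
    (hk : finrank F2 ↥(L₁ ⊓ L₂) = k) :
    ∃ u v : Fin k ⊕ Fin (n - k) → V n, IsDarboux u v ∧ span F2 (Set.range u) = L₁ ∧
      span F2 (Set.range (Sum.elim (u ∘ Sum.inl) (v ∘ Sum.inr))) = L₂ := by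
  have hkn : k ≤ n := hk ▸ h₁.finrank_inf_le L₂
  obtain ⟨u, hu, hu_inl⟩ := exists_spanning_family_adapted inf_le_left hk h₁.2
  obtain ⟨w, huw, hw⟩ := exists_dual_family h₁ h₂ hk hu hu_inl
  have hu_mem : ∀ i, u i ∈ L₁ := fun i => hu ▸ subset_span ⟨i, rfl⟩
  have hu_inl_mem : ∀ i, u (.inl i) ∈ L₁ ⊓ L₂ := fun i => hu_inl ▸ subset_span ⟨i, rfl⟩
  let : LinearOrder (Fin k ⊕ Fin (n - k)) :=
    LinearOrder.lift' _ (Fintype.equivFin (Fin k ⊕ Fin (n - k))).injective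
  -- `convert` reconciles the `DecidableEq` instance of the order with that of the sum type
  have hD : IsDarboux u (isotropize u w) := by
    convert isDarboux_isotropize (fun i j => h₁.1 _ (hu_mem i) _ (hu_mem j)) (by convert huw)
  refine ⟨u, isotropize u w, hD, hu, ?_⟩
  have hv_mem : ∀ j, isotropize u w (.inr j) ∈ L₂ := by
    intro j
    refine add_mem (hw j) (sum_mem fun l _ => ?_)
    rcases l with l | l
    · exact smul_mem _ _ (hu_inl_mem l).2
    · rw [h₂.1 _ (hw l) _ (hw j), zero_smul]
      exact zero_mem _
  have hli : LinearIndependent F2 (Sum.elim (u ∘ Sum.inl) (isotropize u w ∘ Sum.inr)) := by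
    convert hD.linearIndependent.comp (Sum.map Sum.inl Sum.inr)
      (Sum.map_injective.2 ⟨Sum.inl_injective, Sum.inr_injective⟩) using 1
    ext (i | i) <;> rfl
  refine eq_of_le_of_finrank_eq (span_le.2 ?_) ?_
  · rintro _ ⟨i | j, rfl⟩
    exacts [(hu_inl_mem i).2, hv_mem j]
  · rw [finrank_span_eq_card hli, Fintype.card_sum, Fintype.card_fin, Fintype.card_fin, h₂.2]
    omega

end Adapted

section Witt

variable {n : ℕ}

lemma IsSymplectic.finsum_isotropic_comp_map {M : Type*} [AddCommMonoid M]
    {g : V n ≃ₗ[F2] V n} (hg : IsSymplectic g) (m : ℕ) (f : Submodule F2 (V n) → M) :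
    ∑ᶠ S ∈ {S : Submodule F2 (V n) | IsIsotropic S ∧ finrank F2 S = m},
        f (S.map (g : V n →ₗ[F2] V n)) =
      ∑ᶠ S ∈ {S : Submodule F2 (V n) | IsIsotropic S ∧ finrank F2 S = m}, f S :=
  finsum_mem_eq_of_bijOn _ ((orderIsoMapComap g).toEquiv.bijOn fun S => by
    simp [hg.isIsotropic_map_iff, LinearEquiv.finrank_map_eq]) fun _ _ => rfl

lemma exists_isSymplectic_map_eq {L₁ L₂ L₁' L₂' : Submodule F2 (V n)}
    (h₁ : IsLagrangian L₁) (h₂ : IsLagrangian L₂)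
    (h₁' : IsLagrangian L₁') (h₂' : IsLagrangian L₂')
    (hdim : finrank F2 ↥(L₁ ⊓ L₂) = finrank F2 ↥(L₁' ⊓ L₂')) :
    ∃ g : V n ≃ₗ[F2] V n, IsSymplectic g ∧
      L₁.map (g : V n →ₗ[F2] V n) = L₁' ∧ L₂.map (g : V n →ₗ[F2] V n) = L₂' := by
  obtain ⟨k, hk⟩ : ∃ k, finrank F2 ↥(L₁ ⊓ L₂) = k := ⟨_, rfl⟩
  obtain ⟨u, v, hD, hu, huv⟩ := exists_isDarboux_adapted h₁ h₂ hk
  obtain ⟨u', v', hD', hu', huv'⟩ := exists_isDarboux_adapted h₁' h₂' (hdim ▸ hk)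
  have hcard : Fintype.card (Fin k ⊕ Fin (n - k)) = n := by
    have := hk ▸ h₁.finrank_inf_le L₂
    simp only [Fintype.card_sum, Fintype.card_fin]
    omega
  obtain ⟨g, hg, hgu, hgv⟩ := hD.exists_isSymplectic hD' hcard
  refine ⟨g, hg, ?_, ?_⟩
  · rw [← hu, ← hu', map_span, ← Set.range_comp]
    congr 2
    exact funext hgu
  · rw [← huv, ← huv', map_span, ← Set.range_comp]
    congr 2
    funext p
    rcases p with i | i
    exacts [hgu _, hgv _]

end Witt

theorem stmt4_general (n m : ℕ) (L₁ L₂ L₁' L₂' : Submodule F2 (V n))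
    (h₁ : IsLagrangian L₁) (h₂ : IsLagrangian L₂)
    (h₁' : IsLagrangian L₁') (h₂' : IsLagrangian L₂')
    (hdim : Module.finrank F2 ↥(L₁ ⊓ L₂) = Module.finrank F2 ↥(L₁' ⊓ L₂')) :
    (∑ᶠ S ∈ {S : Submodule F2 (V n) | IsIsotropic S ∧ Module.finrank F2 S = m},
        Nat.card ↥(S ⊓ L₁) ^ 2 * Nat.card ↥(S ⊓ L₂) ^ 2)
      = ∑ᶠ S ∈ {S : Submodule F2 (V n) | IsIsotropic S ∧ Module.finrank F2 S = m},
          Nat.card ↥(S ⊓ L₁') ^ 2 * Nat.card ↥(S ⊓ L₂') ^ 2 := by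
  obtain ⟨g, hg, rfl, rfl⟩ := exists_isSymplectic_map_eq h₁ h₂ h₁' h₂' hdim
  refine Eq.trans (finsum_mem_congr rfl fun S _ => ?_) (hg.finsum_isotropic_comp_map m _)
  have hcard (W : Submodule F2 (V n)) : Nat.card (W.map (g : V n →ₗ[F2] V n)) = Nat.card W :=
    Nat.card_congr (g.submoduleMap W).toEquiv.symm
  rw [← map_inf _ g.injective, ← map_inf _ g.injective, hcard, hcard]

/-- If `L₁, L₂, L₁′, L₂′ ⊂ 𝔽₂^{2n}` are Lagrangian subspaces with
`dim(L₁ ∩ L₂) = dim(L₁′ ∩ L₂′)`, then the sums of `|S ∩ L₁|²|S ∩ L₂|²` and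
`|S ∩ L₁′|²|S ∩ L₂′|²` over all `m`-dimensional isotropic subspaces `S` agree. -/
theorem stmt4 (n m : ℕ) (hm : m ≤ n) (L₁ L₂ L₁' L₂' : Submodule F2 (V n))
    (h₁ : IsLagrangian L₁) (h₂ : IsLagrangian L₂)
    (h₁' : IsLagrangian L₁') (h₂' : IsLagrangian L₂')
    (hdim : Module.finrank F2 ↥(L₁ ⊓ L₂) = Module.finrank F2 ↥(L₁' ⊓ L₂')) :
    (∑ᶠ S ∈ {S : Submodule F2 (V n) | IsIsotropic S ∧ Module.finrank F2 S = m},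
        Nat.card ↥(S ⊓ L₁) ^ 2 * Nat.card ↥(S ⊓ L₂) ^ 2)
      = ∑ᶠ S ∈ {S : Submodule F2 (V n) | IsIsotropic S ∧ Module.finrank F2 S = m},
          Nat.card ↥(S ⊓ L₁') ^ 2 * Nat.card ↥(S ⊓ L₂') ^ 2 :=
  stmt4_general n m L₁ L₂ L₁' L₂' h₁ h₂ h₁' h₂' hdim
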